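/- Let G be a finite group, 𝓕 a family of subgroups closed under conjugation and taking subgroups, R a commutative ring with 1, and N a normal subgroup of G with N ∈ 𝓕. For every G-set X one has Def^G_{G/N} R[X] ≅ R[X^N] as RΓ_{G/N}-modules, where the N-fixed-point set X^N is regarded as a G/N-set. In particular, if H ∈ 𝓕 implies HN ∈ 𝓕, then Def^G_{G/N} sends projective RΓ_G-modules to projective RΓ_{G/N}-modules. -/

import Mathlib

open CategoryTheory CategoryTheory.Limits Opposite

/-! Core: orbit category over a family of subgroups, modules over it,
chain complexes, dimension functions, homology spheres. -/

/-- The conjugate subgroup `g K g⁻¹`. -/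
def conjSub {G : Type} [Group G] (g : G) (K : Subgroup G) : Subgroup G :=
  K.map (MulAut.conj g).toMonoidHom

/-- A family of subgroups of `G`, closed under conjugation and under taking subgroups. -/
structure SubgroupFamily (G : Type) [Group G] : Type where
  mem : Subgroup G → Prop
  conj_mem : ∀ (g : G) (K : Subgroup G), mem K → mem (conjSub g K)
  le_mem : ∀ (H K : Subgroup G), H ≤ K → mem K → mem H

/-- `(H) ≤ (K)` : some conjugate of `H` is contained in `K`, i.e. `g⁻¹ H g ≤ K` for some `g`. -/
def ConjLE {G : Type} [Group G] (H K : Subgroup G) : Prop := ∃ g : G, H ≤ conjSub g K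

/-- A conjugation-invariant (super class) function. -/
def ConjInv {G : Type} [Group G] (n : Subgroup G → ℤ) : Prop :=
  ∀ (g : G) (K : Subgroup G), n (conjSub g K) = n K

/-- Monotone super class function: `n(H) ≥ n(K)` whenever `(H) ≤ (K)`. -/
def MonotoneConj {G : Type} [Group G] (n : Subgroup G → ℤ) : Prop :=
  ∀ H K : Subgroup G, ConjLE H K → n K ≤ n H

/-- Objects of the orbit category `Or_𝓕 G`: orbits `G/K` with `K ∈ 𝓕`. -/
def OrbitObj {G : Type} [Group G] (F : SubgroupFamily G) : Type := {K : Subgroup G // F.mem K}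

/-- The orbit category: morphisms `G/K → G/L` are the `G`-equivariant maps. -/
instance {G : Type} [Group G] (F : SubgroupFamily G) : Category (OrbitObj F) where
  Hom K L := (G ⧸ K.1) →[G] (G ⧸ L.1)
  id K := MulActionHom.id G
  comp f g := g.comp f

/-- The category of `RΓ_G`-modules: contravariant functors from the orbit
category to `R`-modules. -/
abbrev OrbitMod (R : Type) [CommRing R] {G : Type} [Group G] (F : SubgroupFamily G) :=
  (OrbitObj F)ᵒᵖ ⥤ ModuleCat.{0} R

variable {G : Type} [Group G] {R : Type} [CommRing R] {F : SubgroupFamily G}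

/-- The free `RΓ_G`-module `R[G/H^?]`, with value the free `R`-module on
`Map_G(G/K, G/H)` at the object `G/K`. -/
noncomputable def freeAt (R : Type) [CommRing R] {G : Type} [Group G] {F : SubgroupFamily G}
    (H : OrbitObj F) : OrbitMod R F where
  obj K := ModuleCat.of R ((K.unop ⟶ H) →₀ R)
  map f := ModuleCat.ofHom (Finsupp.lmapDomain R R (fun u => f.unop ≫ u))
  map_id K := by
    apply ModuleCat.hom_ext
    simp only [unop_id, Category.id_comp]
    exact Finsupp.lmapDomain_id R R
  map_comp f g := by
    apply ModuleCat.hom_ext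
    simp only [unop_comp, Category.assoc]
    exact Finsupp.lmapDomain_comp R R _ _

/-- A free `RΓ_G`-module: a direct sum of modules `R[G/H^?]`, `H ∈ 𝓕`. -/
def IsFreeMod (M : OrbitMod R F) : Prop :=
  ∃ (ι : Type) (b : ι → OrbitObj F), Nonempty (M ≅ ∐ (fun i => freeAt R (b i)))

/-- A finitely generated `RΓ_G`-module: admits an epimorphism from a
finitely generated free module. -/
def IsFGMod (M : OrbitMod R F) : Prop :=
  ∃ (ι : Type) (_ : Fintype ι) (b : ι → OrbitObj F)
    (π : (∐ (fun i => freeAt R (b i))) ⟶ M), Epi π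

/-- A projective `RΓ_G`-module: a direct summand of a free module. -/
def IsProjMod (M : OrbitMod R F) : Prop :=
  ∃ (Fr : OrbitMod R F), IsFreeMod Fr ∧ ∃ (s : M ⟶ Fr) (r : Fr ⟶ M), s ≫ r = 𝟙 M

/-- Chain complexes of `RΓ_G`-modules (non-negatively graded). -/
abbrev OrbitComplex (R : Type) [CommRing R] {G : Type} [Group G] (F : SubgroupFamily G) :=
  ChainComplex (OrbitMod R F) ℕ

/-- The chain complex `C` vanishes at the object `G/K` in degree `i`. -/
def IsZeroAt (C : OrbitComplex R F) (K : OrbitObj F) (i : ℕ) : Prop :=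
  Subsingleton ((C.X i).obj (op K))

/-- The chain complex `C` is finite-dimensional: `C_i = 0` for all large `i`. -/
def IsFiniteDimC (C : OrbitComplex R F) : Prop :=
  ∃ n : ℕ, ∀ i : ℕ, n < i → ∀ K : OrbitObj F, IsZeroAt C K i

/-- The chain complex `C` is finite: finite-dimensional with finitely
generated chain modules. -/
def IsFiniteC (C : OrbitComplex R F) : Prop :=
  IsFiniteDimC C ∧ ∀ i : ℕ, IsFGMod (C.X i)

/-- `dim C(K)`: the largest `d` with `C_d(K) ≠ 0` (or `-1` for the zero complex). -/
noncomputable def dimAt (C : OrbitComplex R F) (K : OrbitObj F) : ℤ :=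
  sSup (insert (-1 : ℤ) {d : ℤ | ∃ i : ℕ, (i : ℤ) = d ∧ ¬ IsZeroAt C K i})

/-- The dimension function `Dim C : S(G) → ℤ`, with value `-1` outside `𝓕`. -/
noncomputable def DimFun (C : OrbitComplex R F) : Subgroup G → ℤ := fun H =>
  open scoped Classical in
  if h : F.mem H then dimAt C ⟨H, h⟩ else -1

/-- The augmented complex `⋯ → C₁ → C₀ → M → 0` (with `M` placed in degree `0`,
i.e. the whole complex shifted up by one). -/
noncomputable def augment {V : Type 1} [Category.{0} V] [Abelian V]
    (C : ChainComplex V ℕ) (M : V) (π : C.X 0 ⟶ M) (h : C.d 1 0 ≫ π = 0) :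
    ChainComplex V ℕ :=
  ChainComplex.of
    (fun j => match j with
      | 0 => M
      | (i+1) => C.X i)
    (fun j => match j with
      | 0 => π
      | (i+1) => C.d (i+1) i)
    (fun j => match j with
      | 0 => h
      | (i+1) => C.d_comp_d (i+2) (i+1) i)

/-- The constant coefficient system `R̲`. -/
noncomputable def constR (R : Type) [CommRing R] {G : Type} [Group G] (F : SubgroupFamily G) :
    OrbitMod R F :=
  (Functor.const (OrbitObj F)ᵒᵖ).obj (ModuleCat.of R R)

/-- Evaluation of a chain complex over `RΓ_G` at the object `G/K`. -/
noncomputable def evalC (C : OrbitComplex R F) (K : OrbitObj F) :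
    ChainComplex (ModuleCat.{0} R) ℕ where
  X i := (C.X i).obj (op K)
  d i j := (C.d i j).app (op K)
  shape i j hij := by rw [C.shape i j hij]; rfl
  d_comp_d' i j k _ _ := by
    rw [← NatTrans.comp_app, C.d_comp_d]; rfl

/-- The augmented complex of `C(K)` (with `R` in degree `-1`, shifted up by one). -/
noncomputable def augC (C : OrbitComplex R F) (ε : C.X 0 ⟶ constR R F)
    (h : C.d 1 0 ≫ ε = 0) (K : OrbitObj F) : ChainComplex (ModuleCat.{0} R) ℕ :=
  augment (evalC C K) (ModuleCat.of R R) (ε.app (op K))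
    (by show (C.d 1 0).app (op K) ≫ ε.app (op K) = 0
        rw [show (C.d 1 0).app (op K) ≫ ε.app (op K) = (C.d 1 0 ≫ ε).app (op K) from rfl, h]; rfl)

/-- `C` is an `R`-homology `n`-sphere: there is an augmentation `ε : C₀ → R̲`
such that for every `K ∈ 𝓕` the reduced homology of `C(K)` is that of the
sphere `S^{n(K)}` with coefficients in `R`.  (The homology of the augmented
complex — shifted up by one — is `R` in degree `n(K)+1` and zero elsewhere.) -/
noncomputable def IsHomologySphere (C : OrbitComplex R F) (n : Subgroup G → ℤ) : Prop :=
  ∃ (ε : C.X 0 ⟶ constR R F) (h : C.d 1 0 ≫ ε = 0),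
    (∀ K : OrbitObj F, (∃ i, ¬ IsZeroAt C K i) → Function.Surjective (ε.app (op K))) ∧
    ∀ (K : OrbitObj F) (j : ℕ),
      (if (j : ℤ) = n K.1 + 1
        then Nonempty ((augC C ε h K).homology j ≅ ModuleCat.of R R)
        else Subsingleton ((augC C ε h K).homology j))

/-- The chain map `C(K) → C(H)` induced by a `G`-map `f : G/H → G/K`. -/
noncomputable def evalMap (C : OrbitComplex R F) {H K : OrbitObj F} (f : H ⟶ K) :
    evalC C K ⟶ evalC C H where
  f i := (C.X i).map f.op
  comm' i j _ := (C.d i j).naturality f.op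

/-- Condition (ii) of an algebraic homotopy representation: if `n(H) = n(K)`,
every `G`-map `f : G/H → G/K` induces an `R`-homology isomorphism `C(K) → C(H)`. -/
noncomputable def CondII (C : OrbitComplex R F) (n : Subgroup G → ℤ) : Prop :=
  ∀ (H K : OrbitObj F) (f : H ⟶ K), n H.1 = n K.1 →
    ∀ i : ℕ, IsIso (HomologicalComplex.homologyMap (evalMap C f) i)

/-- Condition (iii) of an algebraic homotopy representation. -/
def CondIII (F : SubgroupFamily G) (n : Subgroup G → ℤ) : Prop :=
  ∀ H K L : Subgroup G, F.mem H → F.mem K → F.mem L → H ≤ K → H ≤ L →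
    n H = n K → n H = n L → -1 < n H → F.mem (K ⊔ L) ∧ n (K ⊔ L) = n H



variable {G : Type} [Group G]

/-- The `G`-map `G/K → G/L`, `gK ↦ gpL`, defined when `p⁻¹ K p ≤ L`. -/
def orbitMk {K L : Subgroup G} (p : G) (h : ∀ k ∈ K, p⁻¹ * k * p ∈ L) :
    (G ⧸ K) →[G] (G ⧸ L) where
  toFun x := Quotient.liftOn' x (fun g => ((g * p : G) : G ⧸ L)) (by
    intro a b hab
    rw [QuotientGroup.leftRel_apply] at hab
    apply Quotient.sound'
    rw [QuotientGroup.leftRel_apply]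
    have : (a * p)⁻¹ * (b * p) = p⁻¹ * (a⁻¹ * b) * p := by group
    rw [this]
    exact h _ hab)
  map_smul' g x := by
    induction x using QuotientGroup.induction_on with
    | H a => show (((g * a) * p : G) : G ⧸ L) = g • ((a * p : G) : G ⧸ L)
             rw [mul_assoc]; rfl

@[simp] lemma orbitMk_apply {K L : Subgroup G} (p : G) (h : ∀ k ∈ K, p⁻¹ * k * p ∈ L) (g : G) :
    orbitMk p h (g : G ⧸ K) = ((g * p : G) : G ⧸ L) := rfl

/-- The distinguished representative of a `G`-map `G/K → G/L`. -/
noncomputable def orbitPt {K L : Subgroup G} (φ : (G ⧸ K) →[G] (G ⧸ L)) : G :=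
  (φ ((1 : G) : G ⧸ K)).out

lemma orbitPt_spec {K L : Subgroup G} (φ : (G ⧸ K) →[G] (G ⧸ L)) :
    ((orbitPt φ : G) : G ⧸ L) = φ ((1 : G) : G ⧸ K) := Quotient.out_eq _

lemma orbit_hom_eq {K L : Subgroup G} (φ : (G ⧸ K) →[G] (G ⧸ L)) (g : G) :
    φ ((g : G) : G ⧸ K) = ((g * orbitPt φ : G) : G ⧸ L) := by
  calc φ ((g : G) : G ⧸ K) = φ (g • ((1 : G) : G ⧸ K)) := by
        rw [show g • ((1 : G) : G ⧸ K) = ((g * 1 : G) : G ⧸ K) from rfl, mul_one]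
    _ = g • φ ((1 : G) : G ⧸ K) := map_smul φ g _
    _ = g • ((orbitPt φ : G) : G ⧸ L) := by rw [orbitPt_spec]
    _ = ((g * orbitPt φ : G) : G ⧸ L) := rfl

lemma orbit_hom_mem {K L : Subgroup G} (φ : (G ⧸ K) →[G] (G ⧸ L)) :
    ∀ k ∈ K, (orbitPt φ)⁻¹ * k * orbitPt φ ∈ L := by
  intro k hk
  have h1 : ((k : G) : G ⧸ K) = ((1 : G) : G ⧸ K) := by
    rw [QuotientGroup.eq]; simpa using K.inv_mem hk
  have h2 : ((k * orbitPt φ : G) : G ⧸ L) = ((1 * orbitPt φ : G) : G ⧸ L) := by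
    rw [← orbit_hom_eq, ← orbit_hom_eq, h1]
  rw [QuotientGroup.eq] at h2
  have : (k * orbitPt φ)⁻¹ * (1 * orbitPt φ) = ((orbitPt φ)⁻¹ * k * orbitPt φ)⁻¹ := by group
  rw [this] at h2
  simpa using L.inv_mem h2

-- extensionality for maps out of quotients
lemma orbit_hom_ext {K L : Subgroup G} (φ ψ : (G ⧸ K) →[G] (G ⧸ L))
    (h : ∀ g : G, φ ((g : G) : G ⧸ K) = ψ ((g : G) : G ⧸ K)) : φ = ψ := by
  ext x
  induction x using QuotientGroup.induction_on with
  | H a => exact h a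

/-- The family `𝓕_P = {K ∈ 𝓕 : K ≤ P}` of subgroups of `P` induced by a family
of subgroups of `G`. -/
def SubFamily (F : SubgroupFamily G) (P : Subgroup G) : SubgroupFamily ↥P where
  mem K := F.mem (K.map P.subtype)
  conj_mem g K hK := by
    show F.mem ((conjSub g K).map P.subtype)
    have h : (conjSub g K).map P.subtype = conjSub (g : G) (K.map P.subtype) := by
      unfold conjSub
      rw [Subgroup.map_map, Subgroup.map_map]
      congr 1
    rw [h]
    exact F.conj_mem _ _ hK
  le_mem H K h hK := F.le_mem _ _ (Subgroup.map_mono h) hK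

/-- The `G`-map `G/K → G/L` induced by a `P`-map `P/K → P/L`, for `K, L ≤ P`. -/
noncomputable def inducedSubMap (P : Subgroup G) {K L : Subgroup ↥P}
    (φ : (↥P ⧸ K) →[↥P] (↥P ⧸ L)) :
    (G ⧸ K.map P.subtype) →[G] (G ⧸ L.map P.subtype) :=
  orbitMk ((orbitPt φ : ↥P) : G) (by
    intro k hk
    obtain ⟨k₀, hk₀, rfl⟩ := Subgroup.mem_map.mp hk
    exact Subgroup.mem_map.mpr ⟨_, orbit_hom_mem φ k₀ hk₀, by simp⟩)

lemma inducedSubMap_id (P : Subgroup G) (K : Subgroup ↥P) :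
    inducedSubMap P (MulActionHom.id ↥P (X := ↥P ⧸ K)) = MulActionHom.id G := by
  apply orbit_hom_ext
  intro g
  have hq : (orbitPt (MulActionHom.id ↥P (X := ↥P ⧸ K))) ∈ K := by
    have h0 := orbitPt_spec (MulActionHom.id ↥P (X := ↥P ⧸ K))
    have h1 : (MulActionHom.id ↥P (X := ↥P ⧸ K)) (((1 : ↥P) : ↥P ⧸ K)) =
        ((1 : ↥P) : ↥P ⧸ K) := rfl
    rw [h1, QuotientGroup.eq] at h0
    simpa using K.inv_mem h0
  show ((g * ((orbitPt (MulActionHom.id ↥P (X := ↥P ⧸ K)) : ↥P) : G) : G) :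
      G ⧸ K.map P.subtype) = ((g : G) : G ⧸ K.map P.subtype)
  rw [QuotientGroup.eq]
  have h2 : (g * ((orbitPt (MulActionHom.id ↥P (X := ↥P ⧸ K)) : ↥P) : G))⁻¹ * g =
      (((orbitPt (MulActionHom.id ↥P (X := ↥P ⧸ K)) : ↥P) : G))⁻¹ := by group
  rw [h2]
  exact (K.map P.subtype).inv_mem (Subgroup.mem_map.mpr ⟨_, hq, rfl⟩)

lemma inducedSubMap_comp (P : Subgroup G) {K L M : Subgroup ↥P}
    (φ : (↥P ⧸ K) →[↥P] (↥P ⧸ L)) (ψ : (↥P ⧸ L) →[↥P] (↥P ⧸ M)) :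
    inducedSubMap P (ψ.comp φ) = (inducedSubMap P ψ).comp (inducedSubMap P φ) := by
  apply orbit_hom_ext
  intro g
  have hr : (orbitPt (ψ.comp φ))⁻¹ * (orbitPt φ * orbitPt ψ) ∈ M := by
    have h1 : ((orbitPt (ψ.comp φ) : ↥P) : ↥P ⧸ M) = ((orbitPt φ * orbitPt ψ : ↥P) : ↥P ⧸ M) := by
      rw [orbitPt_spec]
      show ψ (φ ((1 : ↥P) : ↥P ⧸ K)) = _
      rw [show φ (((1 : ↥P) : ↥P ⧸ K)) = ((orbitPt φ : ↥P) : ↥P ⧸ L) from (orbitPt_spec φ).symm,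
        orbit_hom_eq ψ (orbitPt φ)]
    exact QuotientGroup.eq.mp h1
  show ((g * ((orbitPt (ψ.comp φ) : ↥P) : G) : G) : G ⧸ M.map P.subtype) =
    (inducedSubMap P ψ) ((inducedSubMap P φ) ((g : G) : G ⧸ K.map P.subtype))
  unfold inducedSubMap
  rw [orbitMk_apply, orbitMk_apply, QuotientGroup.eq]
  refine Subgroup.mem_map.mpr ⟨_, hr, ?_⟩
  simp only [Subgroup.coe_subtype]
  push_cast
  group

/-- The functor `Γ_P → Γ_G` sending `P/K` to `G/K`; restriction of modules
along (the opposite of) this functor is the restriction functor `res^G_P`. -/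
noncomputable def subOrbitFunctor (F : SubgroupFamily G) (P : Subgroup G) :
    OrbitObj (SubFamily F P) ⥤ OrbitObj F where
  obj K := ⟨K.1.map P.subtype, K.2⟩
  map {K L} φ := inducedSubMap P φ
  map_id K := inducedSubMap_id P K.1
  map_comp {K L M} φ ψ := inducedSubMap_comp P φ ψ

/-! ### The orbit-category functor `Γ_{G/N} → Γ_G` induced by a quotient `G → G/N` -/

/-- The `G`-map `G/K' → G/L'` (where `K' = comap(K̄)`, `L' = comap(L̄)`) induced by a
`G/N`-map `(G/N)/K̄ → (G/N)/L̄`. -/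
noncomputable def inducedQuotMap (N : Subgroup G) [N.Normal] {Kb Lb : Subgroup (G ⧸ N)}
    (φ : ((G ⧸ N) ⧸ Kb) →[G ⧸ N] ((G ⧸ N) ⧸ Lb)) :
    (G ⧸ Kb.comap (QuotientGroup.mk' N)) →[G] (G ⧸ Lb.comap (QuotientGroup.mk' N)) :=
  orbitMk ((orbitPt φ).out) (by
    intro k hk
    rw [Subgroup.mem_comap]
    have hout : (QuotientGroup.mk' N) (orbitPt φ).out = orbitPt φ := by
      rw [QuotientGroup.mk'_apply]; exact Quotient.out_eq _
    rw [map_mul, map_mul, map_inv, hout]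
    exact orbit_hom_mem φ _ (Subgroup.mem_comap.mp hk))

lemma inducedQuotMap_id (N : Subgroup G) [N.Normal] (Kb : Subgroup (G ⧸ N)) :
    inducedQuotMap N (MulActionHom.id (G ⧸ N) (X := (G ⧸ N) ⧸ Kb)) = MulActionHom.id G := by
  apply orbit_hom_ext
  intro g
  have hout : (QuotientGroup.mk' N) (orbitPt (MulActionHom.id (G ⧸ N) (X := (G ⧸ N) ⧸ Kb))).out
      = orbitPt (MulActionHom.id (G ⧸ N) (X := (G ⧸ N) ⧸ Kb)) := by
    rw [QuotientGroup.mk'_apply]; exact Quotient.out_eq _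
  have hq : (orbitPt (MulActionHom.id (G ⧸ N) (X := (G ⧸ N) ⧸ Kb))).out ∈
      Kb.comap (QuotientGroup.mk' N) := by
    rw [Subgroup.mem_comap, hout]
    have h0 := orbitPt_spec (MulActionHom.id (G ⧸ N) (X := (G ⧸ N) ⧸ Kb))
    have h1 : (MulActionHom.id (G ⧸ N) (X := (G ⧸ N) ⧸ Kb)) ((1 : G ⧸ N) : (G ⧸ N) ⧸ Kb) =
        ((1 : G ⧸ N) : (G ⧸ N) ⧸ Kb) := rfl
    rw [h1, QuotientGroup.eq] at h0
    simpa using Kb.inv_mem h0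
  show ((g * (orbitPt (MulActionHom.id (G ⧸ N) (X := (G ⧸ N) ⧸ Kb))).out : G) :
      G ⧸ Kb.comap (QuotientGroup.mk' N)) = ((g : G) : G ⧸ Kb.comap (QuotientGroup.mk' N))
  rw [QuotientGroup.eq]
  have h2 : (g * (orbitPt (MulActionHom.id (G ⧸ N) (X := (G ⧸ N) ⧸ Kb))).out)⁻¹ * g =
      ((orbitPt (MulActionHom.id (G ⧸ N) (X := (G ⧸ N) ⧸ Kb))).out)⁻¹ := by group
  rw [h2]
  exact (Kb.comap (QuotientGroup.mk' N)).inv_mem hq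

lemma inducedQuotMap_comp (N : Subgroup G) [N.Normal] {Kb Lb Mb : Subgroup (G ⧸ N)}
    (φ : ((G ⧸ N) ⧸ Kb) →[G ⧸ N] ((G ⧸ N) ⧸ Lb))
    (ψ : ((G ⧸ N) ⧸ Lb) →[G ⧸ N] ((G ⧸ N) ⧸ Mb)) :
    inducedQuotMap N (ψ.comp φ) = (inducedQuotMap N ψ).comp (inducedQuotMap N φ) := by
  apply orbit_hom_ext
  intro g
  have hr : (orbitPt (ψ.comp φ))⁻¹ * (orbitPt φ * orbitPt ψ) ∈ Mb := by
    have h1 : ((orbitPt (ψ.comp φ) : G ⧸ N) : (G ⧸ N) ⧸ Mb)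
        = ((orbitPt φ * orbitPt ψ : G ⧸ N) : (G ⧸ N) ⧸ Mb) := by
      rw [orbitPt_spec]
      show ψ (φ ((1 : G ⧸ N) : (G ⧸ N) ⧸ Kb)) = _
      rw [show φ ((1 : G ⧸ N) : (G ⧸ N) ⧸ Kb) = ((orbitPt φ : G ⧸ N) : (G ⧸ N) ⧸ Lb) from
            (orbitPt_spec φ).symm,
        orbit_hom_eq ψ (orbitPt φ)]
    exact QuotientGroup.eq.mp h1
  show ((g * (orbitPt (ψ.comp φ)).out : G) : G ⧸ Mb.comap (QuotientGroup.mk' N)) =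
    (inducedQuotMap N ψ) ((inducedQuotMap N φ) ((g : G) : G ⧸ Kb.comap (QuotientGroup.mk' N)))
  unfold inducedQuotMap
  rw [orbitMk_apply, orbitMk_apply, QuotientGroup.eq]
  rw [Subgroup.mem_comap]
  have hout : ∀ {Ab Bb : Subgroup (G ⧸ N)} (χ : ((G ⧸ N) ⧸ Ab) →[G ⧸ N] ((G ⧸ N) ⧸ Bb)),
      (QuotientGroup.mk' N) (orbitPt χ).out = orbitPt χ := fun χ => by
    rw [QuotientGroup.mk'_apply]; exact Quotient.out_eq _
  have : (QuotientGroup.mk' N) ((g * (orbitPt (ψ.comp φ)).out)⁻¹ * (g * (orbitPt φ).out * (orbitPt ψ).out))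
      = (orbitPt (ψ.comp φ))⁻¹ * (orbitPt φ * orbitPt ψ) := by
    rw [map_mul, map_inv, map_mul, map_mul, map_mul, hout, hout, hout]
    group
  rw [this]
  exact hr

/-- The functor `Γ_{G/N} → Γ_G` regarding an orbit of `G/N` as a `G`-set via the
quotient map `G → G/N`.  Restriction of modules along (the opposite of) this
functor is the deflation functor `Def^G_{G/N}`. -/
noncomputable def quotOrbitFunctor (F : SubgroupFamily G) (N : Subgroup G) [N.Normal]
    (FQ : SubgroupFamily (G ⧸ N))
    (hFQ : ∀ Kb : Subgroup (G ⧸ N), FQ.mem Kb ↔ F.mem (Kb.comap (QuotientGroup.mk' N))) :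
    OrbitObj FQ ⥤ OrbitObj F where
  obj Kb := ⟨Kb.1.comap (QuotientGroup.mk' N), (hFQ _).mp Kb.2⟩
  map {Kb Lb} φ := inducedQuotMap N φ
  map_id Kb := inducedQuotMap_id N Kb.1
  map_comp {Kb Lb Mb} φ ψ := inducedQuotMap_comp N φ ψ

/-- The deflation functor `Def^G_{G/N}`: restriction of modules along
`Γ_{G/N} → Γ_G`. -/
noncomputable def defMod (R : Type) [CommRing R] {G : Type} [Group G] (F : SubgroupFamily G)
    (N : Subgroup G) [N.Normal] (FQ : SubgroupFamily (G ⧸ N))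
    (hFQ : ∀ Kb : Subgroup (G ⧸ N), FQ.mem Kb ↔ F.mem (Kb.comap (QuotientGroup.mk' N))) :
    OrbitMod R F ⥤ OrbitMod R FQ :=
  (Functor.whiskeringLeft _ _ _).obj (quotOrbitFunctor F N FQ hFQ).op

/-! ### The module `R[X]` of a `G`-set `X` -/

/-- The `RΓ_G`-module `R[X]` of a `G`-set `X`, with value the free `R`-module
on `X^K ≅ Map_G(G/K, X)` at `G/K`. -/
noncomputable def gsetMod (R : Type) [CommRing R] {G : Type} [Group G] (F : SubgroupFamily G)
    (X : Type) [MulAction G X] : OrbitMod R F where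
  obj V := ModuleCat.of R (((G ⧸ (V.unop).1) →[G] X) →₀ R)
  map {V W} f := ModuleCat.ofHom (Finsupp.lmapDomain R R (fun u => u.comp f.unop))
  map_id V := ModuleCat.hom_ext <|
    (congrArg (Finsupp.lmapDomain R R)
      (funext fun (u : (G ⧸ (V.unop).1) →[G] X) => MulActionHom.comp_id u)).trans
      (Finsupp.lmapDomain_id R R)
  map_comp {V W U} f g := by
    have h : (fun (u : (G ⧸ (V.unop).1) →[G] X) => u.comp ((f ≫ g).unop)) =
        ((fun (u : (G ⧸ (W.unop).1) →[G] X) => u.comp g.unop) ∘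
          (fun (u : (G ⧸ (V.unop).1) →[G] X) => u.comp f.unop)) :=
      funext fun u => MulActionHom.comp_assoc u f.unop g.unop
    exact ModuleCat.hom_ext <| (congrArg (Finsupp.lmapDomain R R) h).trans (Finsupp.lmapDomain_comp R R _ _)

/-- A `G/N`-set regarded as a `G`-set via the quotient map `G → G/N`. -/
def InflatedSet {G : Type} [Group G] (N : Subgroup G) [N.Normal] (X : Type) : Type := X

instance {G : Type} [Group G] (N : Subgroup G) [N.Normal] (X : Type)
    [MulAction (G ⧸ N) X] : MulAction G (InflatedSet N X) :=
  MulAction.compHom X (QuotientGroup.mk' N)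

/-- The `G/N`-action on the `N`-fixed points of a `G`-set. -/
noncomputable instance fixedPointsQuotientAction {G : Type} [Group G] (N : Subgroup G)
    [hN : N.Normal] (X : Type) [MulAction G X] :
    MulAction (G ⧸ N) (MulAction.fixedPoints ↥N X) where
  smul q x := Quotient.liftOn' q
    (fun g => (⟨g • (x : X), by
      rw [MulAction.mem_fixedPoints]
      intro n
      have h1 : (n : G) • (g • (x : X)) = g • (((g⁻¹ * n * g : G) : G) • (x : X)) := by
        rw [← mul_smul, ← mul_smul]
        congr 1
        group
      have h2 : ((g⁻¹ * (n : G) * g : G)) • (x : X) = (x : X) := by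
        have hmem : g⁻¹ * (n : G) * g ∈ N := by
          have := hN.conj_mem (n : G) n.2 g⁻¹
          simpa [mul_assoc] using this
        exact x.2 ⟨_, hmem⟩
      show (n : G) • (g • (x : X)) = g • (x : X)
      rw [h1, h2]⟩ : MulAction.fixedPoints ↥N X))
    (by
      intro a b hab
      rw [QuotientGroup.leftRel_apply] at hab
      apply Subtype.ext
      show a • (x : X) = b • (x : X)
      have hx : ((a⁻¹ * b : G)) • (x : X) = (x : X) := x.2 ⟨_, hab⟩
      have hb : b = a * (a⁻¹ * b) := by group
      rw [hb, mul_smul, hx])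
  one_smul x := by
    apply Subtype.ext
    show (1 : G) • (x : X) = (x : X)
    exact one_smul G (x : X)
  mul_smul q r x := by
    induction q using QuotientGroup.induction_on with
    | H a =>
      induction r using QuotientGroup.induction_on with
      | H b =>
        apply Subtype.ext
        show (a * b) • (x : X) = a • (b • (x : X))
        exact mul_smul a b (x : X)

/-! A `G`-map `G ⧸ π⁻¹(K̄) → X`, where `π : G → G ⧸ N`, is the same as a `G/N`-map
`(G ⧸ N) ⧸ K̄ → X^N`: the source is the inflation of `(G ⧸ N) ⧸ K̄`, on which `N` acts
trivially, and inflation is left adjoint to taking `N`-fixed points. This identification is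
natural in `K̄`, and linearizing it gives `Def R[X] ≅ R[X^N]`.

Deflation is restriction along a functor, hence a left adjoint (to right Kan extension): it
preserves direct sums and retracts. Since `N` is normal, `(G ⧸ H)^N` is all of `G ⧸ H` when
`N ≤ H` and empty otherwise, so `Def R[G/H^?] ≅ R[(G/H)^N]` is `R[(G/N)/(H/N)^?]` or `0`, and
deflation sends free modules to free modules. -/

namespace MulActionHom

variable {M A B X Y : Type*} [Monoid M] [MulAction M A] [MulAction M B] [MulAction M X]
  [MulAction M Y]

noncomputable def precompEquivOfBijective (e : A →[M] B) (he : Function.Bijective e) :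
    (B →[M] X) ≃ (A →[M] X) where
  toFun u := u.comp e
  invFun v := v.comp <|
    e.inverse _ (Equiv.ofBijective e he).left_inv (Equiv.ofBijective e he).right_inv
  left_inv u := by ext b; exact congrArg u ((Equiv.ofBijective e he).apply_symm_apply b)
  right_inv v := by ext a; exact congrArg v ((Equiv.ofBijective e he).symm_apply_apply a)

noncomputable def postcompEquivOfBijective (e : X →[M] Y) (he : Function.Bijective e) :
    (A →[M] X) ≃ (A →[M] Y) where
  toFun u := e.comp u
  invFun v :=
    (e.inverse _ (Equiv.ofBijective e he).left_inv (Equiv.ofBijective e he).right_inv).comp v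
  left_inv u := by ext a; exact (Equiv.ofBijective e he).symm_apply_apply (u a)
  right_inv v := by ext a; exact (Equiv.ofBijective e he).apply_symm_apply (v a)

end MulActionHom

section OrbitModules

variable {G : Type} [Group G] (R : Type) [CommRing R] (F : SubgroupFamily G)

/-- `gsetMod R F X` is definitionally `orbitHomFunctor F X ⋙ ModuleCat.free R`. -/
def orbitHomFunctor (X : Type) [MulAction G X] : (OrbitObj F)ᵒᵖ ⥤ Type where
  obj V := (G ⧸ V.unop.1) →[G] X
  map f := ↾fun u => u.comp f.unop

noncomputable def gsetModIsoOfBijective {X Y : Type} [MulAction G X] [MulAction G Y]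
    (e : X →[G] Y) (he : Function.Bijective e) : gsetMod R F X ≅ gsetMod R F Y :=
  Functor.isoWhiskerRight
    (NatIso.ofComponents (F := orbitHomFunctor F X) (G := orbitHomFunctor F Y)
      (fun _ => (MulActionHom.postcompEquivOfBijective e he).toIso) fun _ => rfl)
    (ModuleCat.free R)

lemma isZero_gsetMod_of_isEmpty (X : Type) [MulAction G X] [hX : IsEmpty X] :
    IsZero (gsetMod R F X) :=
  Functor.isZero _ fun V =>
    have : IsEmpty ((G ⧸ V.unop.1) →[G] X) := ⟨fun u => isEmptyElim (u (1 : G))⟩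
    ModuleCat.isZero_of_subsingleton (ModuleCat.of R (((G ⧸ V.unop.1) →[G] X) →₀ R))

variable {R F}

lemma IsFreeMod.of_iso {M M' : OrbitMod R F} (hM : IsFreeMod M) (e : M ≅ M') : IsFreeMod M' :=
  let ⟨ι, b, ⟨e'⟩⟩ := hM
  ⟨ι, b, ⟨e.symm ≪≫ e'⟩⟩

lemma isFreeMod_freeAt (b : OrbitObj F) : IsFreeMod (freeAt R b) :=
  ⟨PUnit, fun _ => b, ⟨(coproductUniqueIso fun _ : PUnit => freeAt R b).symm⟩⟩

lemma isFreeMod_of_isZero {M : OrbitMod R F} (hM : IsZero M) : IsFreeMod M :=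
  ⟨PEmpty, PEmpty.elim,
    ⟨hM.iso ((IsZero.iff_id_eq_zero _).mpr (Sigma.hom_ext _ _ (·.elim)))⟩⟩

lemma isFreeMod_sigma {ι : Type} {M : ι → OrbitMod R F} (hM : ∀ i, IsFreeMod (M i)) :
    IsFreeMod (∐ M) := by
  choose κ b e using hM
  exact ⟨Σ i, κ i, fun p => b p.1 p.2,
    ⟨Sigma.mapIso (fun i => (e i).some) ≪≫ sigmaSigmaIso κ fun i j => freeAt R (b i j)⟩⟩

variable {G' : Type} [Group G'] {F' : SubgroupFamily G'}

lemma IsFreeMod.map (Φ : OrbitMod R F ⥤ OrbitMod R F') [PreservesColimits Φ]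
    (hΦ : ∀ b, IsFreeMod (Φ.obj (freeAt R b))) {M : OrbitMod R F} (hM : IsFreeMod M) :
    IsFreeMod (Φ.obj M) :=
  let ⟨_, b, ⟨e⟩⟩ := hM
  (isFreeMod_sigma fun i => hΦ (b i)).of_iso (Φ.mapIso e ≪≫ PreservesCoproduct.iso Φ _).symm

lemma IsProjMod.map (Φ : OrbitMod R F ⥤ OrbitMod R F') [PreservesColimits Φ]
    (hΦ : ∀ b, IsFreeMod (Φ.obj (freeAt R b))) {M : OrbitMod R F} (hM : IsProjMod M) :
    IsProjMod (Φ.obj M) :=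
  let ⟨P, hP, s, r, hsr⟩ := hM
  ⟨Φ.obj P, hP.map Φ hΦ, Φ.map s, Φ.map r, by rw [← Φ.map_comp, hsr, Φ.map_id]⟩

end OrbitModules

section Inflation

variable {G : Type} [Group G] (N : Subgroup G) [hN : N.Normal]

lemma smul_coset_eq_self_iff_le {H : Subgroup G} (x : G ⧸ H) :
    (∀ n : N, (n : G) • x = x) ↔ N ≤ H := by
  induction x using QuotientGroup.induction_on with | H g =>
  constructor
  · intro hx n hn
    have := hx ⟨g * n * g⁻¹, hN.conj_mem n hn g⟩
    change ((g * n * g⁻¹ * g : G) : G ⧸ H) = g at this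
    rw [QuotientGroup.eq] at this
    simpa using this
  · intro hNH n
    change (((n : G) * g : G) : G ⧸ H) = g
    rw [QuotientGroup.eq]
    simpa [mul_assoc] using hNH (hN.conj_mem _ (N.inv_mem n.2) g⁻¹)

lemma InflatedSet.smul_def {Y : Type} [MulAction (G ⧸ N) Y] (g : G) (y : InflatedSet N Y) :
    g • y = (id ((g : G ⧸ N) • (id y : Y)) : InflatedSet N Y) := rfl

noncomputable def inflationHomEquiv (Y X : Type) [MulAction (G ⧸ N) Y] [MulAction G X] :
    (InflatedSet N Y →[G] X) ≃ (Y →[G ⧸ N] MulAction.fixedPoints N X) where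
  toFun u :=
    { toFun y := ⟨u (id y), fun n => by
        rw [Subgroup.smul_def, ← map_smul, InflatedSet.smul_def,
          (QuotientGroup.eq_one_iff (n : G)).mpr n.2, one_smul]
        rfl⟩
      map_smul' q y := by
        induction q using QuotientGroup.induction_on with
        | H g => exact Subtype.ext (map_smul u g (id y : InflatedSet N Y)) }
  invFun v :=
    { toFun y := v (id y)
      map_smul' g y := congrArg Subtype.val (map_smul v (g : G ⧸ N) (id y : Y)) }
  left_inv _ := rfl
  right_inv _ := rfl

def quotientInflHom (K : Subgroup G) (Kb : Subgroup (G ⧸ N))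
    (hK : K ≤ Kb.comap (QuotientGroup.mk' N)) :
    G ⧸ K →[G] InflatedSet N ((G ⧸ N) ⧸ Kb) where
  toFun := Quotient.map' (QuotientGroup.mk' N) fun a b hab => by
    rw [QuotientGroup.leftRel_apply] at hab ⊢
    simpa using hK hab
  map_smul' g x := by
    induction x using QuotientGroup.induction_on with
    | H a => rfl

lemma quotientInflHom_bijective (K : Subgroup G) (Kb : Subgroup (G ⧸ N))
    (hK : K = Kb.comap (QuotientGroup.mk' N)) :
    Function.Bijective (quotientInflHom N K Kb hK.le) := by
  refine ⟨fun x y hxy => ?_, fun y => ?_⟩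
  · induction x using QuotientGroup.induction_on with | H a =>
    induction y using QuotientGroup.induction_on with | H b =>
    refine QuotientGroup.eq.mpr (hK.ge ?_)
    simpa using QuotientGroup.eq.mp hxy
  · induction y using QuotientGroup.induction_on with | H q =>
    induction q using QuotientGroup.induction_on with | H g =>
    exact ⟨g, rfl⟩

variable {N} in
def restrictFixedPoints {X Y : Type} [MulAction G X] [MulAction (G ⧸ N) Y]
    (e : X →[G] InflatedSet N Y) : MulAction.fixedPoints N X →[G ⧸ N] Y where
  toFun x := e x
  map_smul' q x := by
    induction q using QuotientGroup.induction_on with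
    | H g => exact map_smul e g x.1

lemma restrictFixedPoints_bijective {X Y : Type} [MulAction G X] [MulAction (G ⧸ N) Y]
    {e : X →[G] InflatedSet N Y} (he : Function.Bijective e)
    (hX : ∀ x : X, x ∈ MulAction.fixedPoints N X) :
    Function.Bijective (restrictFixedPoints e) :=
  ⟨fun _ _ hxy => Subtype.ext (he.1 hxy), fun y =>
    let ⟨x, hx⟩ := he.2 y
    ⟨⟨x, hX x⟩, hx⟩⟩

end Inflation

section Deflation

variable {G : Type} [Group G] (R : Type) [CommRing R] (F : SubgroupFamily G) (N : Subgroup G)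
  [N.Normal] (FQ : SubgroupFamily (G ⧸ N))
  (hFQ : ∀ Kb : Subgroup (G ⧸ N), FQ.mem Kb ↔ F.mem (Kb.comap (QuotientGroup.mk' N)))

lemma quotientInflHom_comp_inducedQuotMap {Kb Lb : Subgroup (G ⧸ N)}
    (φ : ((G ⧸ N) ⧸ Kb) →[G ⧸ N] ((G ⧸ N) ⧸ Lb))
    (x : G ⧸ Kb.comap (QuotientGroup.mk' N)) :
    quotientInflHom N _ Lb le_rfl (inducedQuotMap N φ x) =
      φ (quotientInflHom N _ Kb le_rfl x) := by
  induction x using QuotientGroup.induction_on with | H g =>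
  show (((g * (orbitPt φ).out : G) : G ⧸ N) : (G ⧸ N) ⧸ Lb) =
    φ ((g : G ⧸ N) : (G ⧸ N) ⧸ Kb)
  rw [orbit_hom_eq, QuotientGroup.mk_mul, QuotientGroup.out_eq']

noncomputable def defOrbitHomIso (X : Type) [MulAction G X] :
    orbitHomFunctor FQ (MulAction.fixedPoints N X) ≅
      (quotOrbitFunctor F N FQ hFQ).op ⋙ orbitHomFunctor F X :=
  NatIso.ofComponents
    (fun Kb => ((inflationHomEquiv N _ X).symm.trans
      (MulActionHom.precompEquivOfBijective _
        (quotientInflHom_bijective N _ Kb.unop.1 rfl))).toIso)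
    fun {Kb _} f => by
      ext (v : ((G ⧸ N) ⧸ Kb.unop.1) →[G ⧸ N] MulAction.fixedPoints N X)
      refine MulActionHom.ext fun x => ?_
      exact congrArg (fun q => (v q : X)) (quotientInflHom_comp_inducedQuotMap N f.unop x).symm

noncomputable def defGsetModIso (X : Type) [MulAction G X] :
    (defMod R F N FQ hFQ).obj (gsetMod R F X) ≅ gsetMod R FQ (MulAction.fixedPoints N X) :=
  (Functor.isoWhiskerRight (defOrbitHomIso F N FQ hFQ X) (ModuleCat.free R)).symm

instance : PreservesColimits (defMod R F N FQ hFQ) :=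
  (Functor.ranAdjunction (quotOrbitFunctor F N FQ hFQ).op
    (ModuleCat.{0} R)).leftAdjoint_preservesColimits

lemma isFreeMod_defMod_freeAt (H : OrbitObj F) :
    IsFreeMod ((defMod R F N FQ hFQ).obj (freeAt R H)) := by
  refine IsFreeMod.of_iso ?_ (defGsetModIso R F N FQ hFQ (G ⧸ H.1)).symm
  by_cases hNH : N ≤ H.1
  · have hH : (H.1.map (QuotientGroup.mk' N)).comap (QuotientGroup.mk' N) = H.1 := by
      rw [QuotientGroup.comap_map_mk', sup_eq_right.mpr hNH]
    have he := quotientInflHom_bijective N H.1 _ hH.symm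
    have hmem : FQ.mem (H.1.map (QuotientGroup.mk' N)) := (hFQ _).mpr (by rw [hH]; exact H.2)
    exact (isFreeMod_freeAt ⟨_, hmem⟩).of_iso (gsetModIsoOfBijective R FQ _
      (restrictFixedPoints_bijective N he fun x => (smul_coset_eq_self_iff_le N x).mpr hNH)).symm
  · exact isFreeMod_of_isZero (isZero_gsetMod_of_isEmpty R FQ _
      (hX := ⟨fun x => hNH ((smul_coset_eq_self_iff_le N x.1).mp x.2)⟩))

end Deflation

theorem statement6_general (G R : Type) [Group G] [CommRing R]
    (F : SubgroupFamily G) (N : Subgroup G) [N.Normal]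
    (FQ : SubgroupFamily (G ⧸ N))
    (hFQ : ∀ Kb : Subgroup (G ⧸ N), FQ.mem Kb ↔ F.mem (Kb.comap (QuotientGroup.mk' N))) :
    (∀ (X : Type) [MulAction G X],
      Nonempty ((defMod R F N FQ hFQ).obj (gsetMod R F X) ≅
        gsetMod R FQ (MulAction.fixedPoints ↥N X))) ∧
    ((∀ H : Subgroup G, F.mem H → F.mem (H ⊔ N)) →
      ∀ M : OrbitMod R F, IsProjMod M → IsProjMod ((defMod R F N FQ hFQ).obj M)) :=
  ⟨fun X _ => ⟨defGsetModIso R F N FQ hFQ X⟩,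
    fun _ _ hM => hM.map _ (isFreeMod_defMod_freeAt R F N FQ hFQ)⟩

/-- [HPY 2014, Lemma on deflation].  Let `N ⊴ G` with `N ∈ 𝓕`.
For every `G`-set `X`, the deflation satisfies `Def^G_{G/N} R[X] ≅ R[X^N]`,
the `N`-fixed points regarded as a `G/N`-set.  In particular, if `H ∈ 𝓕`
implies `HN ∈ 𝓕`, then `Def^G_{G/N}` sends projective modules to projective
modules. -/
theorem statement6 (G R : Type) [Group G] [Finite G] [CommRing R]
    (F : SubgroupFamily G) (N : Subgroup G) [N.Normal] (hNF : F.mem N)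
    (FQ : SubgroupFamily (G ⧸ N))
    (hFQ : ∀ Kb : Subgroup (G ⧸ N), FQ.mem Kb ↔ F.mem (Kb.comap (QuotientGroup.mk' N))) :
    (∀ (X : Type) [MulAction G X],
      Nonempty ((defMod R F N FQ hFQ).obj (gsetMod R F X) ≅
        gsetMod R FQ (MulAction.fixedPoints ↥N X))) ∧
    ((∀ H : Subgroup G, F.mem H → F.mem (H ⊔ N)) →
      ∀ M : OrbitMod R F, IsProjMod M → IsProjMod ((defMod R F N FQ hFQ).obj M)) :=
  statement6_general G R F N FQ hFQ
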